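/- arXiv:2604.07544 — 5 statements merged into one kernel-verified Lean document; each statement's English description precedes it below -/
import Mathlib

section
/- Define a sequence of rationals by x(1) = 0 and, for k ≥ 1, x(k+1) = (k·x(k) + b(k))/(k+1), where b(k) = 1 if x(k) written in lowest terms p/q has p odd (with the conventions b(k)=1 if x(k)=0 and b(k)=0 if x(k)=1), and b(k) = 0 if p is even. Then for every n ≥ 1, x(2^n) = 1/2 and x(2^n + 2^{n-1}) = 2/3. In particular, the sequence x(k) does not converge. -/
/-- Tie-breaking bit: 1 if the numerator of `q` in lowest terms is odd
(with conventions b=1 at q=0 and b=0 at q=1), else 0. -/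
def tieBit (q : ℚ) : ℚ :=
  if q = 0 then 1
  else if q = 1 then 0
  else if Odd q.num then 1 else 0

lemma num_frac (c k : ℕ) (hk : 0 < k) (h : Nat.Coprime c k) :
    ((c : ℚ) / (k : ℚ)).num = c := by
  have := Rat.num_div_eq_of_coprime (a := (c:ℤ)) (b := (k:ℤ)) (by exact_mod_cast hk)
    (by simpa using h)
  simpa using this

lemma num_frac' (d c k : ℕ) (hd : 0 < d) (hk : 0 < k) (h : Nat.Coprime c k) :
    (((d * c : ℕ) : ℚ) / ((d * k : ℕ) : ℚ)).num = c := by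
  push_cast
  rw [mul_div_mul_left _ _ (by exact_mod_cast hd.ne' : (d:ℚ) ≠ 0)]
  exact num_frac c k hk h

lemma oddA (N j : ℕ) (hN : 1 ≤ N) (hj : j < 2^(N-1)) :
    Odd ((((2^(N-1) + j : ℕ) : ℚ) / ((2^N + j : ℕ) : ℚ)).num) := by
  have hNsplit : 2^(N-1) + 2^(N-1) = 2^N := by
    rw [← two_mul, ← pow_succ']; congr 1; omega
  rcases Nat.eq_zero_or_pos j with rfl | hj0
  · have e1 : 2^(N-1) + 0 = 2^(N-1) * 1 := by ring
    have e2 : 2^N + 0 = 2^(N-1) * 2 := by omega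
    rw [e1, e2, num_frac' _ _ _ (by positivity) (by norm_num) (by norm_num)]
    decide
  · have hN2 : 2 ≤ N := by
      by_contra h
      interval_cases N <;> omega
    set k := 2^N + j with hkdef
    have hk0 : k ≠ 0 := by positivity
    obtain ⟨a, m, hm, hk⟩ := Nat.exists_eq_pow_mul_and_not_dvd hk0 2 (by norm_num)
    have hmodd : Odd m := by rw [Nat.odd_iff]; omega
    have ha : a + 2 ≤ N := by
      by_contra h
      have h1 : N - 1 ≤ a := by omega
      have hd1 : 2^(N-1) ∣ k := dvd_trans (pow_dvd_pow 2 h1) ⟨m, hk⟩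
      have hd2 : (2:ℕ)^(N-1) ∣ 2^N := pow_dvd_pow 2 (by omega)
      have hd3 : 2^(N-1) ∣ j := by
        have := Nat.dvd_sub hd1 hd2
        simpa [hkdef] using this
      exact absurd (Nat.le_of_dvd hj0 hd3) (by omega)
    set s := N - 1 - a with hsdef
    have hs1 : 1 ≤ s := by omega
    have hpow : 2^a * 2^s = 2^(N-1) := by rw [← pow_add]; congr 1; omega
    have hmge : 2^s ≤ m := by
      by_contra h
      push_neg at h
      have h2 : 2^a * m < 2^a * 2^s := by gcongr <;> simp [h]
      omega
    have hc'odd : Odd (m - 2^s) := Nat.Odd.sub_even hmge hmodd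
      (Nat.even_pow.mpr ⟨even_two, by omega⟩)
    have hcop2 : Nat.Coprime m (2^s) := Nat.Coprime.pow_right _ (Nat.coprime_two_right.mpr hmodd)
    have hcop : Nat.Coprime (m - 2^s) m := by
      have h1 : Nat.Coprime (m - 2^s) (2^s) := (Nat.coprime_sub_self_left hmge).mpr hcop2
      have h2 : m = (m - 2^s) + 2^s := by omega
      nth_rewrite 2 [h2]
      rw [Nat.coprime_self_add_right]
      exact h1
    have e1 : 2^(N-1) + j = 2^a * (m - 2^s) := by
      have hd : 2^a * (m - 2^s) = 2^a * m - 2^a * 2^s := by rw [Nat.mul_sub]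
      omega
    have e2 : k = 2^a * m := hk
    rw [e1, e2, num_frac' _ _ _ (by positivity) (by omega) hcop]
    exact_mod_cast hc'odd

lemma evenB (N j : ℕ) (hN : 1 ≤ N) (hj : j < 2^(N-1)) :
    ¬ Odd ((((2^N : ℕ) : ℚ) / ((2^N + 2^(N-1) + j : ℕ) : ℚ)).num) := by
  have hNsplit : 2^(N-1) + 2^(N-1) = 2^N := by
    rw [← two_mul, ← pow_succ']; congr 1; omega
  set k := 2^N + 2^(N-1) + j with hkdef
  have hk0 : k ≠ 0 := by positivity
  obtain ⟨a, m, hm, hk⟩ := Nat.exists_eq_pow_mul_and_not_dvd hk0 2 (by norm_num)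
  have hmodd : Odd m := by rw [Nat.odd_iff]; omega
  have ha : a + 1 ≤ N := by
    by_contra h
    have h1 : N ≤ a := by omega
    have hd1 : 2^N ∣ k := dvd_trans (pow_dvd_pow 2 h1) ⟨m, hk⟩
    have hd3 : 2^N ∣ 2^(N-1) + j := by
      have h4 := Nat.dvd_sub hd1 (dvd_refl (2^N))
      have h5 : k - 2^N = 2^(N-1) + j := by omega
      rwa [h5] at h4
    have := Nat.le_of_dvd (by positivity) hd3
    omega
  have hpow : 2^a * 2^(N-a) = 2^N := by rw [← pow_add]; congr 1; omega
  have hcop : Nat.Coprime (2^(N-a)) m :=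
    Nat.Coprime.pow_left _ (Nat.coprime_two_left.mpr hmodd)
  have e1 : 2^N = 2^a * 2^(N-a) := hpow.symm
  have e2 : k = 2^a * m := hk
  rw [e1, e2, num_frac' _ _ _ (by positivity) (by omega) hcop]
  have heven : Even ((2:ℕ)^(N-a)) := Nat.even_pow.mpr ⟨even_two, by omega⟩
  intro h
  rw [Int.odd_coe_nat] at h
  exact (Nat.not_odd_iff_even.mpr heven) h


lemma tieBit_one (q : ℚ) (h0 : q ≠ 0) (h1 : q ≠ 1) (h : Odd q.num) : tieBit q = 1 := by
  simp [tieBit, h0, h1, h]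

lemma tieBit_zero (q : ℚ) (h0 : q ≠ 0) (h1 : q ≠ 1) (h : ¬ Odd q.num) : tieBit q = 0 := by
  simp [tieBit, h0, h1, h]

lemma frac_ne_zero (c k : ℕ) (hc : 0 < c) (hk : 0 < k) : (c : ℚ) / (k : ℚ) ≠ 0 := by
  positivity

lemma frac_ne_one (c k : ℕ) (hck : c < k) : (c : ℚ) / (k : ℚ) ≠ 1 := by
  have hk : (0:ℚ) < k := by exact_mod_cast Nat.lt_of_le_of_lt (Nat.zero_le c) hck
  have : (c : ℚ) / (k : ℚ) < 1 := by
    rw [div_lt_one hk]; exact_mod_cast hck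
  exact this.ne


section
variable (x : ℕ → ℚ)
  (hrec : ∀ k : ℕ, 1 ≤ k → x (k + 1) = ((k : ℚ) * x k + tieBit (x k)) / ((k : ℚ) + 1))

include hrec

lemma phaseA (N : ℕ) (hN : 1 ≤ N)
    (hbase : x (2^N) = ((2^(N-1) : ℕ) : ℚ) / ((2^N : ℕ) : ℚ)) :
    ∀ j, j ≤ 2^(N-1) → x (2^N + j) = ((2^(N-1) + j : ℕ) : ℚ) / ((2^N + j : ℕ) : ℚ) := by
  intro j hj
  induction j with
  | zero => simpa using hbase
  | succ j ihj =>
    have hj' : j < 2^(N-1) := by omega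
    have hA := ihj (by omega)
    have hNN : 2^(N-1) < 2^N := Nat.pow_lt_pow_right (by norm_num) (by omega)
    have hk1 : 1 ≤ 2^N + j := le_trans Nat.one_le_two_pow (Nat.le_add_right _ _)
    have h := hrec (2^N + j) hk1
    rw [hA, tieBit_one _ (frac_ne_zero _ _ (by positivity) (by positivity))
        (frac_ne_one _ _ (by omega)) (oddA N j hN hj')] at h
    have hkne : ((2^N + j : ℕ) : ℚ) ≠ 0 := by positivity
    show x ((2^N + j) + 1) = _
    rw [h]
    push_cast at hkne ⊢
    field_simp
    ring

lemma phaseB (N : ℕ) (hN : 1 ≤ N)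
    (hbase : x (2^N) = ((2^(N-1) : ℕ) : ℚ) / ((2^N : ℕ) : ℚ)) :
    ∀ j, j ≤ 2^(N-1) →
      x (2^N + 2^(N-1) + j) = ((2^N : ℕ) : ℚ) / ((2^N + 2^(N-1) + j : ℕ) : ℚ) := by
  have hNsplit : 2^(N-1) + 2^(N-1) = 2^N := by
    rw [← two_mul, ← pow_succ']; congr 1; omega
  intro j hj
  induction j with
  | zero =>
    have := phaseA x hrec N hN hbase (2^(N-1)) le_rfl
    rw [hNsplit] at this
    simpa [Nat.add_assoc] using this
  | succ j ihj =>
    have hj' : j < 2^(N-1) := by omega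
    have hB := ihj (by omega)
    have hk1 : 1 ≤ 2^N + 2^(N-1) + j := le_trans Nat.one_le_two_pow (le_trans (Nat.le_add_right _ _) (Nat.le_add_right _ _))
    have h := hrec (2^N + 2^(N-1) + j) hk1
    rw [hB, tieBit_zero _ (frac_ne_zero _ _ (by positivity) (by positivity))
        (frac_ne_one _ _ (by have := Nat.one_le_two_pow (n := N-1); omega))
        (evenB N j hN hj')] at h
    have hkne : ((2^N + 2^(N-1) + j : ℕ) : ℚ) ≠ 0 := by positivity
    show x ((2^N + 2^(N-1) + j) + 1) = _
    rw [h]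
    push_cast at hkne ⊢
    field_simp
    ring

lemma base (h1 : x 1 = 0) :
    ∀ N, 1 ≤ N → x (2^N) = ((2^(N-1) : ℕ) : ℚ) / ((2^N : ℕ) : ℚ) := by
  intro N hN
  induction N with
  | zero => omega
  | succ N ih =>
    rcases Nat.eq_zero_or_pos N with rfl | hN1
    · have h := hrec 1 le_rfl
      rw [h1] at h
      have ht : tieBit 0 = 1 := by simp [tieBit]
      rw [ht] at h
      norm_num at h ⊢
      rw [h]
    · have hNsplit : 2^(N-1) + 2^(N-1) = 2^N := by
        rw [← two_mul, ← pow_succ']; congr 1; omega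
      have hB := phaseB x hrec N hN1 (ih hN1) (2^(N-1)) le_rfl
      have hidx : 2^N + 2^(N-1) + 2^(N-1) = 2^(N+1) := by
        have : 2^N + 2^N = 2^(N+1) := by rw [← two_mul, ← pow_succ']
        omega
      rw [hidx] at hB
      simpa using hB
end

theorem stmt0 (x : ℕ → ℚ)
    (h1 : x 1 = 0)
    (hrec : ∀ k : ℕ, 1 ≤ k → x (k + 1) = ((k : ℚ) * x k + tieBit (x k)) / ((k : ℚ) + 1)) :
    (∀ n : ℕ, 1 ≤ n → x (2 ^ n) = 1 / 2 ∧ x (2 ^ n + 2 ^ (n - 1)) = 2 / 3) ∧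
      ¬ ∃ L : ℚ, Filter.Tendsto x Filter.atTop (nhds L) := by
  have main : ∀ n : ℕ, 1 ≤ n → x (2 ^ n) = 1 / 2 ∧ x (2 ^ n + 2 ^ (n - 1)) = 2 / 3 := by
    intro n hn
    have hpow : (2:ℚ)^n = 2^(n-1) * 2 := by rw [← pow_succ]; congr 1; omega
    have hp0 : (0:ℚ) < 2^(n-1) := by positivity
    constructor
    · have h := base x hrec h1 n hn
      rw [h]
      push_cast
      rw [hpow]
      field_simp
    · have h := phaseB x hrec n hn (base x hrec h1 n hn) 0 (Nat.zero_le _)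
      rw [Nat.add_zero] at h
      rw [h]
      push_cast
      rw [hpow]
      field_simp
      ring
  refine ⟨main, ?_⟩
  rintro ⟨L, hL⟩
  have hmono1 : Filter.Tendsto (fun n : ℕ => 2^(n+1)) Filter.atTop Filter.atTop := by
    apply Filter.tendsto_atTop_mono (fun n => ?_) Filter.tendsto_id
    calc n ≤ 2^n := (Nat.lt_two_pow_self (n := n)).le
    _ ≤ 2^(n+1) := Nat.pow_le_pow_right (by norm_num) (by omega)
  have hmono2 : Filter.Tendsto (fun n : ℕ => 2^(n+1) + 2^n) Filter.atTop Filter.atTop := by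
    apply Filter.tendsto_atTop_mono (fun n => ?_) hmono1
    exact Nat.le_add_right _ _
  have t1 : Filter.Tendsto (fun n : ℕ => x (2^(n+1))) Filter.atTop (nhds L) :=
    hL.comp hmono1
  have t2 : Filter.Tendsto (fun n : ℕ => x (2^(n+1) + 2^n)) Filter.atTop (nhds L) :=
    hL.comp hmono2
  have e1 : (fun n : ℕ => x (2^(n+1))) = fun _ => (1/2 : ℚ) :=
    funext fun n => (main (n+1) (by omega)).1
  have e2 : (fun n : ℕ => x (2^(n+1) + 2^n)) = fun _ => (2/3 : ℚ) :=
    funext fun n => (main (n+1) (by omega)).2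
  rw [e1] at t1
  rw [e2] at t2
  have hL1 : (1/2 : ℚ) = L := tendsto_nhds_unique tendsto_const_nhds t1
  have hL2 : (2/3 : ℚ) = L := tendsto_nhds_unique tendsto_const_nhds t2
  rw [← hL2] at hL1
  norm_num at hL1
end

section
/- Let A be an n×m real matrix defining a two-player zero-sum game with value v, and let X* = { x in the probability simplex S_n : min_i (c_i)^T x = v } be Player 1's Nash equilibrium set, where c_i denotes the i-th column of A. If X* contains a relatively open (in the affine hull of S_n) nonempty subset of S_n, then there exists a column index i with c_i = v·1_n (all entries equal to v). -/
/-- Payoff of Player 1's mixed strategy `x` against Player 2's pure action `i`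
(the `i`-th column of `A` dotted with `x`). -/
noncomputable def colPay {n m : ℕ} (A : Matrix (Fin n) (Fin m) ℝ) (i : Fin m)
    (x : Fin n → ℝ) : ℝ := ∑ j, A j i * x j

/-- `min_i (c_i)^T x`. -/
noncomputable def minPay {n m : ℕ} (A : Matrix (Fin n) (Fin (m + 1)) ℝ)
    (x : Fin n → ℝ) : ℝ :=
  Finset.univ.inf' Finset.univ_nonempty fun i => colPay A i x

/-!
Let `x₀` lie in the relatively open piece of `X*` and let `i` be a column attaining
`min_i (c_i)^T x₀ = v`. Near `x₀` in the affine hull of the simplex we have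
`(c_i)^T x ≥ min_k (c_k)^T x = v = (c_i)^T x₀`, so the affine function `x ↦ (c_i)^T x` has a
local minimum at `x₀` relative to the affine hull. An affine function with such a minimum is
constant on the affine subspace, and its values at the vertices of the simplex are the
entries of `c_i`.
-/

open Filter Topology Matrix

theorem AffineMap.eq_of_isLocalMinOn {E : Type*} [AddCommGroup E] [Module ℝ E]
    [TopologicalSpace E] [IsTopologicalAddGroup E] [ContinuousSMul ℝ E]
    (f : E →ᵃ[ℝ] ℝ) {s : AffineSubspace ℝ E} {x y : E} (hx : x ∈ s) (hy : y ∈ s)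
    (hmin : IsLocalMinOn f s x) : f y = f x := by
  -- on the line through `x` and `y`, `f` has slope `f y - f x` and a local minimum at `x`
  have hline : Tendsto (lineMap x y) (𝓝 (0 : ℝ)) (𝓝[s] (lineMap x y (0 : ℝ))) :=
    tendsto_nhdsWithin_iff.2 ⟨lineMap_continuous.tendsto 0,
      .of_forall fun t => lineMap_mem t hx hy⟩
  have hmin' : IsLocalMin (lineMap (f x) (f y) : ℝ → ℝ) 0 := by
    have h := IsMinFilter.comp_tendsto (show IsMinFilter f (𝓝[s] (lineMap x y (0 : ℝ))) _ by
      rw [lineMap_apply_zero]; exact hmin) hline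
    simp only [Function.comp_def, apply_lineMap] at h
    exact h
  exact sub_eq_zero.1 (hmin'.hasDerivAt_eq_zero hasDerivAt_lineMap)

section

variable {n m : ℕ}

def colPayAffineMap (A : Matrix (Fin n) (Fin m) ℝ) (i : Fin m) : (Fin n → ℝ) →ᵃ[ℝ] ℝ :=
  (LinearMap.proj i ∘ₗ Aᵀ.mulVecLin).toAffineMap

@[simp]
theorem coe_colPayAffineMap (A : Matrix (Fin n) (Fin m) ℝ) (i : Fin m) :
    ⇑(colPayAffineMap A i) = colPay A i := rfl

theorem colPay_single (A : Matrix (Fin n) (Fin m) ℝ) (i : Fin m) (j : Fin n) :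
    colPay A i (Pi.single j 1) = A j i := by
  simp [colPay, Pi.single_apply]

theorem minPay_le_colPay (A : Matrix (Fin n) (Fin (m + 1)) ℝ) (i : Fin (m + 1))
    (x : Fin n → ℝ) : minPay A x ≤ colPay A i x :=
  Finset.inf'_le _ (Finset.mem_univ i)

theorem exists_colPay_eq_minPay (A : Matrix (Fin n) (Fin (m + 1)) ℝ) (x : Fin n → ℝ) :
    ∃ i, colPay A i x = minPay A x := by
  obtain ⟨i, -, hi⟩ := Finset.exists_mem_eq_inf' Finset.univ_nonempty fun i => colPay A i x
  exact ⟨i, hi.symm⟩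

end

theorem stmt3_general {n m : ℕ} (A : Matrix (Fin (n + 1)) (Fin (m + 1)) ℝ) (v : ℝ)
    -- X* contains a nonempty subset of S_n that is open relative to the affine hull of S_n
    (V : Set (Fin (n + 1) → ℝ)) (hV : IsOpen V)
    (hne : (V ∩ (affineSpan ℝ (stdSimplex ℝ (Fin (n + 1))) : Set (Fin (n + 1) → ℝ))).Nonempty)
    (hsub : V ∩ (affineSpan ℝ (stdSimplex ℝ (Fin (n + 1))) : Set (Fin (n + 1) → ℝ)) ⊆
      {x ∈ stdSimplex ℝ (Fin (n + 1)) | minPay A x = v}) :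
    ∃ i : Fin (m + 1), ∀ j : Fin (n + 1), A j i = v := by
  set S := affineSpan ℝ (stdSimplex ℝ (Fin (n + 1)))
  obtain ⟨x₀, hx₀V, hx₀S⟩ := hne
  obtain ⟨i, hi⟩ := exists_colPay_eq_minPay A x₀
  have hx₀v : colPay A i x₀ = v := hi.trans (hsub ⟨hx₀V, hx₀S⟩).2
  have hmin : IsLocalMinOn (colPayAffineMap A i) S x₀ := by
    filter_upwards [inter_mem_nhdsWithin S (hV.mem_nhds hx₀V)] with y ⟨hyS, hyV⟩
    calc colPayAffineMap A i x₀ = minPay A y := by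
          rw [coe_colPayAffineMap, hx₀v, (hsub ⟨hyV, hyS⟩).2]
      _ ≤ colPayAffineMap A i y := minPay_le_colPay A i y
  refine ⟨i, fun j => ?_⟩
  have hj := (colPayAffineMap A i).eq_of_isLocalMinOn hx₀S
    (subset_affineSpan ℝ _ (single_mem_stdSimplex ℝ j)) hmin
  rwa [coe_colPayAffineMap, colPay_single, hx₀v] at hj

theorem stmt3 {n m : ℕ} (A : Matrix (Fin (n + 1)) (Fin (m + 1)) ℝ) (v : ℝ)
    -- v is the value of the game
    (hub : ∀ x ∈ stdSimplex ℝ (Fin (n + 1)), minPay A x ≤ v)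
    (hach : ∃ x ∈ stdSimplex ℝ (Fin (n + 1)), minPay A x = v)
    -- X* contains a nonempty subset of S_n that is open relative to the affine hull of S_n
    (V : Set (Fin (n + 1) → ℝ)) (hV : IsOpen V)
    (hne : (V ∩ (affineSpan ℝ (stdSimplex ℝ (Fin (n + 1))) : Set (Fin (n + 1) → ℝ))).Nonempty)
    (hsub : V ∩ (affineSpan ℝ (stdSimplex ℝ (Fin (n + 1))) : Set (Fin (n + 1) → ℝ)) ⊆
      {x ∈ stdSimplex ℝ (Fin (n + 1)) | minPay A x = v}) :
    ∃ i : Fin (m + 1), ∀ j : Fin (n + 1), A j i = v :=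
  stmt3_general A v V hV hne hsub
end

section
/- Let A be an n×m matrix (m ≥ 2) whose first column is c_1 = v·1_n where v is the value of the game, and such that no other column lies in span{1_n}. Let v_{-1} be the value of the zero-sum game with payoff matrix A_{-1} obtained by deleting the first column, and let X*^{(-1)} be Player 1's equilibrium set for A_{-1}. If Player 1's equilibrium set X* of A has positive (n−1)-dimensional measure in S_n, then v_{-1} > v. -/
/-- Minimum payoff in the reduced game obtained by deleting the first column. -/
noncomputable def minPayRed {n m : ℕ} (A : Matrix (Fin n) (Fin (m + 2)) ℝ)
    (x : Fin n → ℝ) : ℝ :=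
  Finset.univ.inf' Finset.univ_nonempty fun i : Fin (m + 1) => colPay A i.succ x

/-- Projection dropping the last coordinate, identifying aff(S_n) with R^{n-1}. -/
def projLast {n : ℕ} (x : Fin (n + 1) → ℝ) : Fin n → ℝ := fun j => x j.castSucc


open MeasureTheory in
lemma hyperplane_volume {n : ℕ} (c : Fin n → ℝ) (d : ℝ) (hc : ∃ j, c j ≠ 0) :
    volume {y : Fin n → ℝ | ∑ j, c j * y j = d} = 0 := by
  obtain ⟨j0, hj0⟩ := hc
  set L : (Fin n → ℝ) →ₗ[ℝ] ℝ :=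
    { toFun := fun y => ∑ j, c j * y j
      map_add' := by intro a b; simp [mul_add, Finset.sum_add_distrib]
      map_smul' := by intro r a; simp [Finset.mul_sum]; ring_nf; simp [mul_comm, mul_left_comm]
    } with hL
  have hLval : ∀ y, L y = ∑ j, c j * y j := fun y => rfl
  have hker : LinearMap.ker L ≠ ⊤ := by
    intro h
    have h1 : (Pi.single j0 1 : Fin n → ℝ) ∈ LinearMap.ker L := by rw [h]; trivial
    have h2 : L (Pi.single j0 1 : Fin n → ℝ) = 0 := h1
    rw [hLval] at h2
    simp [Pi.single_apply, Finset.sum_ite_eq'] at h2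
    exact hj0 h2
  obtain ⟨y0, hy0⟩ : ∃ y0, L y0 = d := by
    refine ⟨(d / c j0) • (Pi.single j0 1 : Fin n → ℝ), ?_⟩
    rw [LinearMap.map_smul, hLval]
    simp [Pi.single_apply, Finset.sum_ite_eq', smul_eq_mul]
    field_simp
  have hset : {y : Fin n → ℝ | ∑ j, c j * y j = d}
      ⊆ (AffineSubspace.mk' y0 (LinearMap.ker L) : Set (Fin n → ℝ)) := by
    intro y hy
    have hmem : y - y0 ∈ LinearMap.ker L := by
      rw [LinearMap.mem_ker, map_sub, hy0, hLval]
      rw [show (∑ j, c j * y j) = d from hy]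
      ring
    exact AffineSubspace.mem_mk'.2 (by simpa [vsub_eq_sub] using hmem)
  refine measure_mono_null hset (Measure.addHaar_affineSubspace _ _ ?_)
  intro h
  have hd := AffineSubspace.direction_mk' y0 (LinearMap.ker L)
  rw [h] at hd
  exact hker (by rw [← hd]; simp [AffineSubspace.direction_top])

theorem stmt5 {n m : ℕ} (A : Matrix (Fin (n + 1)) (Fin (m + 2)) ℝ) (v vneg1 : ℝ)
    -- v is the value of the game A
    (hub : ∀ x ∈ stdSimplex ℝ (Fin (n + 1)), minPay A x ≤ v)
    (hach : ∃ x ∈ stdSimplex ℝ (Fin (n + 1)), minPay A x = v)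
    -- the first column is v·1_n
    (hc1 : ∀ j, A j 0 = v)
    -- no other column lies in span{1_n}
    (hmult : ∀ i : Fin (m + 2), i ≠ 0 → ¬ ∃ c : ℝ, ∀ j, A j i = c)
    -- vneg1 is the value of the reduced game A_{-1}
    (hub1 : ∀ x ∈ stdSimplex ℝ (Fin (n + 1)), minPayRed A x ≤ vneg1)
    (hach1 : ∃ x ∈ stdSimplex ℝ (Fin (n + 1)), minPayRed A x = vneg1)
    -- Player 1's equilibrium set of A has positive (n−1)-dimensional measure
    (hpos : 0 < MeasureTheory.volume
      (projLast '' {x ∈ stdSimplex ℝ (Fin (n + 1)) | minPay A x = v})) :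
    v < vneg1 := by
  by_contra hlt
  push_neg at hlt
  have hsub : projLast '' {x ∈ stdSimplex ℝ (Fin (n + 1)) | minPay A x = v} ⊆
      ⋃ i : Fin (m + 1), {y : Fin n → ℝ |
        ∑ j, (A j.castSucc i.succ - A (Fin.last n) i.succ) * y j
          = vneg1 - A (Fin.last n) i.succ} := by
    rintro _ ⟨x, ⟨hx, hvx⟩, rfl⟩
    have h1 : ∀ i : Fin (m + 1), v ≤ colPay A i.succ x := by
      intro i
      rw [← hvx]
      exact Finset.inf'_le _ (Finset.mem_univ i.succ)
    have h2 : v ≤ minPayRed A x := Finset.le_inf' _ _ fun i _ => h1 i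
    have h3 : minPayRed A x = vneg1 := le_antisymm (hub1 x hx) (hlt.trans h2)
    obtain ⟨i, -, hieq⟩ := Finset.exists_mem_eq_inf' (Finset.univ_nonempty)
      (fun i : Fin (m + 1) => colPay A i.succ x)
    have hi : colPay A i.succ x = vneg1 := by
      rw [← hieq]; exact h3
    rw [Set.mem_iUnion]
    refine ⟨i, ?_⟩
    have hsplit : ∑ j : Fin n, x j.castSucc = 1 - x (Fin.last n) := by
      have := hx.2
      rw [Fin.sum_univ_castSucc] at this
      linarith
    have hcol : (∑ j : Fin n, A j.castSucc i.succ * x j.castSucc)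
        + A (Fin.last n) i.succ * x (Fin.last n) = vneg1 := by
      rw [← hi, colPay, Fin.sum_univ_castSucc]
    have hexp : ∑ j : Fin n, (A j.castSucc i.succ - A (Fin.last n) i.succ) * projLast x j
        = (∑ j : Fin n, A j.castSucc i.succ * x j.castSucc)
          - A (Fin.last n) i.succ * (∑ j : Fin n, x j.castSucc) := by
      rw [Finset.mul_sum, ← Finset.sum_sub_distrib]
      exact Finset.sum_congr rfl fun j _ => by simp [projLast]; ring
    show ∑ j : Fin n, (A j.castSucc i.succ - A (Fin.last n) i.succ) * projLast x j
        = vneg1 - A (Fin.last n) i.succ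
    rw [hexp, hsplit]
    ring_nf
    linarith [hcol]
  have hc : ∀ i : Fin (m + 1),
      ∃ j : Fin n, A j.castSucc i.succ - A (Fin.last n) i.succ ≠ 0 := by
    intro i
    by_contra h
    push_neg at h
    refine hmult i.succ (Fin.succ_ne_zero i) ⟨A (Fin.last n) i.succ, ?_⟩
    intro j
    refine Fin.lastCases rfl (fun k => ?_) j
    have := h k
    linarith
  have hnull : MeasureTheory.volume (⋃ i : Fin (m + 1), {y : Fin n → ℝ |
      ∑ j, (A j.castSucc i.succ - A (Fin.last n) i.succ) * y j
        = vneg1 - A (Fin.last n) i.succ}) = 0 :=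
    MeasureTheory.measure_iUnion_null fun i => hyperplane_volume _ _ (hc i)
  exact hpos.ne' (MeasureTheory.measure_mono_null hsub hnull)
end

section
/- Let A be an n×m matrix with value v, first column c_1 = v·1_n, no other column in span{1_n}, and suppose every column of A is a 'sometimes best response' for Player 2 (i.e., for every j there exists x ∈ S_n with (c_j)^T x = min_i (c_i)^T x). If moreover Player 1's equilibrium set X* is disjoint from ∂S_n, then for every j ≥ 2, the column c_j has at least one entry strictly less than v. -/
/-- Relative boundary of the probability simplex: points with some zero coordinate. -/
def simplexBoundary (n : ℕ) : Set (Fin n → ℝ) :=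
  {x ∈ stdSimplex ℝ (Fin n) | ∃ j, x j = 0}

section colPay

variable {n m : ℕ} {A : Matrix (Fin n) (Fin m) ℝ} {i : Fin m} {x : Fin n → ℝ} {c : ℝ}

lemma colPay_eq_of_forall_eq (hA : ∀ j, A j i = c) (hx : x ∈ stdSimplex ℝ (Fin n)) :
    colPay A i x = c := by
  simp only [colPay, hA, ← Finset.mul_sum, hx.2, mul_one]

lemma le_colPay (hA : ∀ j, c ≤ A j i) (hx : x ∈ stdSimplex ℝ (Fin n)) : c ≤ colPay A i x :=
  calc c = colPay (Matrix.of fun _ _ => c) i x := (colPay_eq_of_forall_eq (fun _ => rfl) hx).symm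
    _ ≤ colPay A i x := Finset.sum_le_sum fun j _ => mul_le_mul_of_nonneg_right (hA j) (hx.1 j)

lemma lt_colPay (hA : ∀ j, c ≤ A j i) {l : Fin n} (hl : c < A l i)
    (hx : x ∈ stdSimplex ℝ (Fin n)) (hxl : 0 < x l) : c < colPay A i x :=
  calc c = colPay (Matrix.of fun _ _ => c) i x := (colPay_eq_of_forall_eq (fun _ => rfl) hx).symm
    _ < colPay A i x :=
      Finset.sum_lt_sum (fun j _ => mul_le_mul_of_nonneg_right (hA j) (hx.1 j))
        ⟨l, Finset.mem_univ l, mul_lt_mul_of_pos_right hl hxl⟩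

end colPay

lemma minPay_eq_colPay {n m : ℕ} {A : Matrix (Fin n) (Fin (m + 1)) ℝ} {i : Fin (m + 1)}
    {x : Fin n → ℝ} (hi : ∀ i', colPay A i x ≤ colPay A i' x) : minPay A x = colPay A i x :=
  le_antisymm (Finset.inf'_le _ (Finset.mem_univ i)) (Finset.le_inf' _ _ fun i' _ => hi i')

lemma pos_of_notMem_simplexBoundary {n : ℕ} {x : Fin n → ℝ} (hx : x ∈ stdSimplex ℝ (Fin n))
    (hb : x ∉ simplexBoundary n) (j : Fin n) : 0 < x j :=
  (hx.1 j).lt_of_ne fun h => hb ⟨hx, j, h.symm⟩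

theorem stmt8_general {n m : ℕ} (A : Matrix (Fin (n + 1)) (Fin (m + 1)) ℝ) (v : ℝ)
    -- the first column is v·1_n
    (hc1 : ∀ j, A j 0 = v)
    -- no other column lies in span{1_n}
    (hmult : ∀ i : Fin (m + 1), i ≠ 0 → ¬ ∃ c : ℝ, ∀ j, A j i = c)
    -- every column is a sometimes best response for Player 2
    (hbr : ∀ i : Fin (m + 1), ∃ x ∈ stdSimplex ℝ (Fin (n + 1)),
      ∀ i' : Fin (m + 1), colPay A i x ≤ colPay A i' x)
    -- every equilibrium of Player 1 is fully mixed
    (hbd : {x ∈ stdSimplex ℝ (Fin (n + 1)) | minPay A x = v} ∩ simplexBoundary (n + 1) = ∅) :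
    ∀ i : Fin (m + 1), i ≠ 0 → ∃ l : Fin (n + 1), A l i < v := by
  intro i hi
  by_contra! hge
  obtain ⟨l, hl⟩ : ∃ l, v < A l i := by
    by_contra! hle
    exact hmult i hi ⟨v, fun j => le_antisymm (hle j) (hge j)⟩
  obtain ⟨x, hx, hbest⟩ := hbr i
  have hval : colPay A i x = v :=
    le_antisymm ((hbest 0).trans (colPay_eq_of_forall_eq hc1 hx).le) (le_colPay hge hx)
  have hinterior : x ∉ simplexBoundary (n + 1) :=
    Set.disjoint_left.mp (Set.disjoint_iff_inter_eq_empty.mpr hbd)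
      ⟨hx, (minPay_eq_colPay hbest).trans hval⟩
  exact (lt_colPay hge hl hx (pos_of_notMem_simplexBoundary hx hinterior l)).ne' hval

theorem stmt8 {n m : ℕ} (A : Matrix (Fin (n + 1)) (Fin (m + 1)) ℝ) (v : ℝ)
    -- v is the value of the game
    (hub : ∀ x ∈ stdSimplex ℝ (Fin (n + 1)), minPay A x ≤ v)
    (hach : ∃ x ∈ stdSimplex ℝ (Fin (n + 1)), minPay A x = v)
    -- the first column is v·1_n
    (hc1 : ∀ j, A j 0 = v)
    -- no other column lies in span{1_n}
    (hmult : ∀ i : Fin (m + 1), i ≠ 0 → ¬ ∃ c : ℝ, ∀ j, A j i = c)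
    -- every column is a sometimes best response for Player 2
    (hbr : ∀ i : Fin (m + 1), ∃ x ∈ stdSimplex ℝ (Fin (n + 1)),
      ∀ i' : Fin (m + 1), colPay A i x ≤ colPay A i' x)
    -- every equilibrium of Player 1 is fully mixed
    (hbd : {x ∈ stdSimplex ℝ (Fin (n + 1)) | minPay A x = v} ∩ simplexBoundary (n + 1) = ∅) :
    ∀ i : Fin (m + 1), i ≠ 0 → ∃ l : Fin (n + 1), A l i < v :=
  stmt8_general A v hc1 hmult hbr hbd
end

section
/- Let A be an n×m matrix with value v, columns c_i, such that c_1 = v·1_n, the equilibrium set X* = { x ∈ S_n : min_i (c_i)^T x = v } is disjoint from ∂S_n, and for every x in the relative interior of X* and every i ≥ 2 we have (c_i)^T x > v. Then for every x* on the relative boundary of X* (within the affine hull of S_n), there exists an index i ≥ 2 such that (c_i)^T x* > v. -/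
/-- Relative interior (within the simplex) of a subset `X` of the simplex. -/
def relInt {n : ℕ} (X : Set (Fin n → ℝ)) : Set (Fin n → ℝ) :=
  {x ∈ X | ∃ ε > (0 : ℝ), Metric.ball x ε ∩ stdSimplex ℝ (Fin n) ⊆ X}

open AffineMap Finset

theorem exists_lineMap_mem_stdSimplex_eq_zero {ι : Type*} [Fintype ι] {x y : ι → ℝ}
    (hx : x ∈ stdSimplex ℝ ι) (hy : y ∈ stdSimplex ℝ ι) (hxy : x ≠ y) :
    ∃ t : ℝ, 0 ≤ t ∧ lineMap x y t ∈ stdSimplex ℝ ι ∧ ∃ j, lineMap x y t j = 0 := by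
  have hdecr : ∃ j, y j < x j := by
    by_contra! hle
    exact hxy <| funext fun j => (sum_eq_sum_iff_of_le fun j _ => hle j).1
      (hx.2.trans hy.2.symm) j (mem_univ j)
  -- `t` is the first time a decreasing coordinate of the ray reaches `0`.
  obtain ⟨j₀, hj₀, hmin⟩ := (univ.filter fun j => y j < x j).exists_min_image
    (fun j => x j / (x j - y j)) (hdecr.imp fun j hj => mem_filter.2 ⟨mem_univ j, hj⟩)
  have hj₀ : 0 < x j₀ - y j₀ := sub_pos.2 (mem_filter.1 hj₀).2
  simp only [funext (pi_lineMap_apply x y _), lineMap_apply_ring']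
  refine ⟨x j₀ / (x j₀ - y j₀), div_nonneg (hx.1 j₀) hj₀.le, ⟨fun j => ?_, ?_⟩, j₀, ?_⟩
  · rcases le_or_gt (x j) (y j) with hxyj | hxyj
    · exact add_nonneg (mul_nonneg (div_nonneg (hx.1 j₀) hj₀.le) (sub_nonneg.2 hxyj)) (hx.1 j)
    · have := (le_div_iff₀ (sub_pos.2 hxyj)).1 (hmin j (by simpa using hxyj))
      nlinarith
  · simp [sum_add_distrib, ← mul_sum, hx.2, hy.2]
  · field_simp
    ring

section Payoffs

variable {n m : ℕ}

theorem colPay_lineMap (A : Matrix (Fin n) (Fin m) ℝ) (i : Fin m) (x y : Fin n → ℝ) (t : ℝ) :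
    colPay A i (lineMap x y t) = lineMap (colPay A i x) (colPay A i y) t := by
  simp only [colPay, pi_lineMap_apply, lineMap_apply_ring', mul_sum, ← sum_sub_distrib,
    ← sum_add_distrib]
  exact sum_congr rfl fun j _ => by ring

theorem colPay_of_forall_eq {A : Matrix (Fin n) (Fin m) ℝ} {i : Fin m} {c : ℝ}
    (hc : ∀ j, A j i = c) {x : Fin n → ℝ} (hx : x ∈ stdSimplex ℝ (Fin n)) :
    colPay A i x = c := by
  simp only [colPay, hc, ← mul_sum, hx.2, mul_one]

theorem minPay_eq_iff_forall_le_colPay {A : Matrix (Fin n) (Fin (m + 1)) ℝ} {v : ℝ}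
    (hc : ∀ j, A j 0 = v) {x : Fin n → ℝ} (hx : x ∈ stdSimplex ℝ (Fin n)) :
    minPay A x = v ↔ ∀ i, v ≤ colPay A i x := by
  have hle : minPay A x ≤ v := (inf'_le _ (mem_univ 0)).trans (colPay_of_forall_eq hc hx).le
  rw [le_antisymm_iff, and_iff_right hle, minPay, le_inf'_iff]
  simp only [mem_univ, true_implies]

end Payoffs

theorem stmt12_general {n m : ℕ} (A : Matrix (Fin (n + 1)) (Fin (m + 1)) ℝ) (v : ℝ)
    -- the first column is v·1_n
    (hc1 : ∀ j, A j 0 = v)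
    -- every equilibrium of Player 1 is fully mixed
    (hbd : {x ∈ stdSimplex ℝ (Fin (n + 1)) | minPay A x = v} ∩ simplexBoundary (n + 1) = ∅)
    -- X* has nonempty relative interior
    (hne : (relInt {x ∈ stdSimplex ℝ (Fin (n + 1)) | minPay A x = v}).Nonempty) :
    ∀ xstar ∈ {x ∈ stdSimplex ℝ (Fin (n + 1)) | minPay A x = v},
      xstar ∉ relInt {x ∈ stdSimplex ℝ (Fin (n + 1)) | minPay A x = v} →
        ∃ i : Fin (m + 1), i ≠ 0 ∧ v < colPay A i xstar := by
  rintro xs ⟨hxs, hxsv⟩ hxs_bd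
  by_contra! hslack
  obtain ⟨x', hx'_int⟩ := hne
  obtain ⟨hx', hx'v⟩ := hx'_int.1
  have hxs_ne : xs ≠ x' := by
    rintro rfl
    exact hxs_bd hx'_int
  have htight : ∀ i, colPay A i xs = v := fun i => by
    rcases eq_or_ne i 0 with rfl | hi
    · exact colPay_of_forall_eq hc1 hxs
    · exact (hslack i hi).antisymm ((minPay_eq_iff_forall_le_colPay hc1 hxs).1 hxsv i)
  obtain ⟨t, ht, hy, j, hj⟩ := exists_lineMap_mem_stdSimplex_eq_zero hxs hx' hxs_ne
  have hyv : minPay A (lineMap xs x' t) = v := (minPay_eq_iff_forall_le_colPay hc1 hy).2 fun i => by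
    have := (minPay_eq_iff_forall_le_colPay hc1 hx').1 hx'v i
    rw [colPay_lineMap, htight, lineMap_apply_ring']
    nlinarith
  exact Set.eq_empty_iff_forall_notMem.1 hbd _ ⟨⟨hy, hyv⟩, hy, j, hj⟩

theorem stmt12 {n m : ℕ} (A : Matrix (Fin (n + 1)) (Fin (m + 1)) ℝ) (v : ℝ)
    -- v is the value of the game
    (hub : ∀ x ∈ stdSimplex ℝ (Fin (n + 1)), minPay A x ≤ v)
    (hach : ∃ x ∈ stdSimplex ℝ (Fin (n + 1)), minPay A x = v)
    -- the first column is v·1_n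
    (hc1 : ∀ j, A j 0 = v)
    -- every equilibrium of Player 1 is fully mixed
    (hbd : {x ∈ stdSimplex ℝ (Fin (n + 1)) | minPay A x = v} ∩ simplexBoundary (n + 1) = ∅)
    -- X* has nonempty relative interior
    (hne : (relInt {x ∈ stdSimplex ℝ (Fin (n + 1)) | minPay A x = v}).Nonempty)
    -- on the relative interior of X*, every non-constant column pays strictly more than v
    (hint : ∀ x ∈ relInt {x ∈ stdSimplex ℝ (Fin (n + 1)) | minPay A x = v},
      ∀ i : Fin (m + 1), i ≠ 0 → v < colPay A i x) :
    ∀ xstar ∈ {x ∈ stdSimplex ℝ (Fin (n + 1)) | minPay A x = v},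
      xstar ∉ relInt {x ∈ stdSimplex ℝ (Fin (n + 1)) | minPay A x = v} →
        ∃ i : Fin (m + 1), i ≠ 0 ∧ v < colPay A i xstar :=
  stmt12_general A v hc1 hbd hne
end
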